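/- Let A ∈ ℝ^{m×n}, let ε > 0, and let x ∈ ℝⁿ with ‖Ax‖ > ε. Set τ₊ = σ_max(A)²/(‖Ax‖ − ε). Then τ₊ ‖(AAᵀ + ε τ₊ I)⁻¹ A x‖ ≥ 1, and the map τ ↦ τ ‖(AAᵀ + ε τ I)⁻¹ A x‖ tends to 0 as τ → 0⁺. -/

import Mathlib

/-!
Write `M_c = A Aᵀ + c I` and `y = A x`. Since `A Aᵀ ⪰ 0`, `⟪v, M_c v⟫ ≥ c ‖v‖²`, so
`‖M_c⁻¹‖ ≤ 1 / c`, while `‖M_c‖ ≤ σ² + c` with `σ = σ_max(A)`.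

The choice of `τ₊` is exactly the one for which `σ² + ε τ₊ = τ₊ ‖y‖`, so
`‖y‖ ≤ ‖M_{ετ₊}‖ ‖M_{ετ₊}⁻¹ y‖ ≤ τ₊ ‖y‖ ‖M_{ετ₊}⁻¹ y‖`, which is the first claim.

For the limit, `y` lies in the range of `A Aᵀ` (which has the same rank as `A`), say
`y = A Aᵀ z`. Then `M_c⁻¹ y = z - c M_c⁻¹ z` has norm at most `2 ‖z‖` for every `c > 0`,
so `τ ‖M_{ετ}⁻¹ y‖ ≤ 2 ‖z‖ τ → 0`.
-/

open scoped Matrix.Norms.L2Operator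
open Matrix WithLp

noncomputable def vecNorm {k : ℕ} (v : Fin k → ℝ) : ℝ := Real.sqrt (∑ i, v i ^ 2)

noncomputable def sigmaMax {m n : ℕ} (A : Matrix (Fin m) (Fin n) ℝ) : ℝ :=
  ⨆ x : {v : Fin n → ℝ // vecNorm v ≤ 1}, vecNorm (A.mulVec x.1)

theorem vecNorm_eq_norm_toLp {k : ℕ} (v : Fin k → ℝ) : vecNorm v = ‖toLp 2 v‖ := by
  simp [vecNorm, EuclideanSpace.norm_eq]

theorem sigmaMax_eq_l2_opNorm {m n : ℕ} (A : Matrix (Fin m) (Fin n) ℝ) : sigmaMax A = ‖A‖ := by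
  let e : {v : Fin n → ℝ // vecNorm v ≤ 1} ≃
      Metric.closedBall (0 : EuclideanSpace ℝ (Fin n)) 1 :=
    (WithLp.equiv 2 _).symm.subtypeEquiv fun v => by simp [vecNorm_eq_norm_toLp]
  rw [l2_opNorm_def, ← ContinuousLinearMap.sSup_unitClosedBall_eq_norm, sSup_image', sigmaMax]
  exact e.iSup_congr fun v => by simp [e, vecNorm_eq_norm_toLp]

namespace Matrix

variable {m n : Type*} [Fintype m] [Fintype n]

theorem range_mulVecLin_self_mul_transpose {R : Type*} [Field R] [LinearOrder R]
    [IsStrictOrderedRing R] (A : Matrix m n R) :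
    LinearMap.range (A * Aᵀ).mulVecLin = LinearMap.range A.mulVecLin := by
  refine Submodule.eq_of_le_of_finrank_le ?_ (rank_self_mul_transpose A).ge
  rintro _ ⟨v, rfl⟩
  exact ⟨Aᵀ *ᵥ v, by simp [mulVec_transpose]⟩

theorem dotProduct_eq_inner_toLp (u v : m → ℝ) :
    u ⬝ᵥ v = inner ℝ (toLp 2 u) (toLp 2 v) := by
  rw [EuclideanSpace.inner_eq_star_dotProduct, star_trivial, dotProduct_comm]

section Real

variable (A : Matrix m n ℝ)

theorem posSemidef_self_mul_transpose : (A * Aᵀ).PosSemidef := by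
  simpa using posSemidef_self_mul_conjTranspose A

theorem norm_toLp_mulVec_le [DecidableEq n] (v : n → ℝ) :
    ‖toLp 2 (A *ᵥ v)‖ ≤ ‖A‖ * ‖toLp 2 v‖ :=
  l2_opNorm_mulVec A (toLp 2 v)

variable [DecidableEq m] {c : ℝ}

theorem isUnit_det_self_mul_transpose_add_smul_one (hc : 0 < c) :
    IsUnit (A * Aᵀ + c • 1).det :=
  (PosDef.det_pos (PosDef.posSemidef_add (posSemidef_self_mul_transpose A)
    (PosDef.one.smul hc))).ne'.isUnit

theorem l2_opNorm_self_mul_transpose_add_smul_one_le [DecidableEq n] (hc : 0 ≤ c) :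
    ‖A * Aᵀ + c • 1‖ ≤ ‖A‖ ^ 2 + c := by
  have h_transpose : ‖Aᵀ‖ = ‖A‖ := by
    rw [← conjTranspose_eq_transpose_of_trivial, l2_opNorm_conjTranspose]
  have h_one : ‖(1 : Matrix m m ℝ)‖ ≤ 1 := by
    rw [← diagonal_one, l2_opNorm_diagonal]
    exact (pi_norm_const_le 1).trans_eq norm_one
  calc ‖A * Aᵀ + c • 1‖ ≤ ‖A‖ * ‖Aᵀ‖ + |c| * ‖(1 : Matrix m m ℝ)‖ :=
        (norm_add_le _ _).trans (add_le_add (l2_opNorm_mul _ _) (norm_smul_le _ _))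
    _ ≤ ‖A‖ ^ 2 + c := by rw [h_transpose, abs_of_nonneg hc]; nlinarith

theorem mul_norm_le_norm_self_mul_transpose_add_smul_one_mulVec (v : m → ℝ) :
    c * ‖toLp 2 v‖ ≤ ‖toLp 2 ((A * Aᵀ + c • 1) *ᵥ v)‖ := by
  have h_quad : c * ‖toLp 2 v‖ ^ 2 ≤ v ⬝ᵥ ((A * Aᵀ + c • 1) *ᵥ v) := by
    have h_psd := (posSemidef_self_mul_transpose A).dotProduct_mulVec_nonneg v
    rw [star_trivial] at h_psd
    rw [add_mulVec, dotProduct_add, smul_mulVec, one_mulVec, dotProduct_smul, smul_eq_mul,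
      ← real_inner_self_eq_norm_sq, ← dotProduct_eq_inner_toLp]
    linarith
  have h_cauchySchwarz :
      v ⬝ᵥ ((A * Aᵀ + c • 1) *ᵥ v) ≤ ‖toLp 2 v‖ * ‖toLp 2 ((A * Aᵀ + c • 1) *ᵥ v)‖ := by
    rw [dotProduct_eq_inner_toLp]
    exact real_inner_le_norm _ _
  rcases (norm_nonneg (toLp 2 v)).eq_or_lt with hv | hv
  · rw [← hv, mul_zero]
    exact norm_nonneg _
  · nlinarith

theorem self_mul_transpose_add_smul_one_mulVec_inv_mulVec (hc : 0 < c) (v : m → ℝ) :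
    (A * Aᵀ + c • 1) *ᵥ ((A * Aᵀ + c • 1)⁻¹ *ᵥ v) = v := by
  rw [mulVec_mulVec, mul_nonsing_inv _ (isUnit_det_self_mul_transpose_add_smul_one A hc),
    one_mulVec]

theorem inv_mulVec_self_mul_transpose_mulVec (hc : 0 < c) (z : m → ℝ) :
    (A * Aᵀ + c • 1)⁻¹ *ᵥ ((A * Aᵀ) *ᵥ z) = z - c • (A * Aᵀ + c • 1)⁻¹ *ᵥ z := by
  have h_sub : (A * Aᵀ) *ᵥ z = (A * Aᵀ + c • 1) *ᵥ z - c • z := by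
    rw [add_mulVec, smul_mulVec, one_mulVec, add_sub_cancel_right]
  rw [h_sub, mulVec_sub, mulVec_mulVec,
    nonsing_inv_mul _ (isUnit_det_self_mul_transpose_add_smul_one A hc), one_mulVec, mulVec_smul]

theorem norm_toLp_le_mul_norm_inv_mulVec [DecidableEq n] (hc : 0 < c) (y : m → ℝ) :
    ‖toLp 2 y‖ ≤ (‖A‖ ^ 2 + c) * ‖toLp 2 ((A * Aᵀ + c • 1)⁻¹ *ᵥ y)‖ := by
  conv_lhs => rw [← self_mul_transpose_add_smul_one_mulVec_inv_mulVec A hc y]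
  exact (norm_toLp_mulVec_le _ _).trans <| mul_le_mul_of_nonneg_right
    (l2_opNorm_self_mul_transpose_add_smul_one_le A hc.le) (norm_nonneg _)

theorem mul_norm_inv_mulVec_le (hc : 0 < c) (y : m → ℝ) :
    c * ‖toLp 2 ((A * Aᵀ + c • 1)⁻¹ *ᵥ y)‖ ≤ ‖toLp 2 y‖ := by
  have h := mul_norm_le_norm_self_mul_transpose_add_smul_one_mulVec A (c := c)
    ((A * Aᵀ + c • 1)⁻¹ *ᵥ y)
  rwa [self_mul_transpose_add_smul_one_mulVec_inv_mulVec A hc] at h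

theorem norm_inv_mulVec_self_mul_transpose_mulVec_le (hc : 0 < c) (z : m → ℝ) :
    ‖toLp 2 ((A * Aᵀ + c • 1)⁻¹ *ᵥ ((A * Aᵀ) *ᵥ z))‖ ≤ 2 * ‖toLp 2 z‖ := by
  rw [inv_mulVec_self_mul_transpose_mulVec A hc, toLp_sub, toLp_smul]
  calc ‖toLp 2 z - c • toLp 2 ((A * Aᵀ + c • 1)⁻¹ *ᵥ z)‖
      ≤ ‖toLp 2 z‖ + c * ‖toLp 2 ((A * Aᵀ + c • 1)⁻¹ *ᵥ z)‖ := by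
        refine (norm_sub_le _ _).trans_eq ?_
        rw [norm_smul, Real.norm_of_nonneg hc.le]
    _ ≤ 2 * ‖toLp 2 z‖ := by linarith [mul_norm_inv_mulVec_le A hc z]

theorem exists_forall_norm_inv_mulVec_mulVec_le (x : n → ℝ) :
    ∃ C, ∀ c : ℝ, 0 < c → ‖toLp 2 ((A * Aᵀ + c • 1)⁻¹ *ᵥ (A *ᵥ x))‖ ≤ C := by
  obtain ⟨z, hz⟩ : A *ᵥ x ∈ LinearMap.range (A * Aᵀ).mulVecLin := by
    rw [range_mulVecLin_self_mul_transpose]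
    exact LinearMap.mem_range_self _ x
  refine ⟨2 * ‖toLp 2 z‖, fun c hc => ?_⟩
  rw [← hz]
  exact norm_inv_mulVec_self_mul_transpose_mulVec_le A hc z

end Real

end Matrix

theorem stmt7 {m n : ℕ} (A : Matrix (Fin m) (Fin n) ℝ) (ε : ℝ) (hε : 0 < ε)
    (x : Fin n → ℝ) (hx : ε < vecNorm (A.mulVec x))
    (τp : ℝ) (hτp : τp = sigmaMax A ^ 2 / (vecNorm (A.mulVec x) - ε)) :
    1 ≤ τp * vecNorm ((A * A.transpose +
      (ε * τp) • (1 : Matrix (Fin m) (Fin m) ℝ))⁻¹.mulVec (A.mulVec x)) ∧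
    Filter.Tendsto
      (fun τ : ℝ => τ * vecNorm ((A * A.transpose +
        (ε * τ) • (1 : Matrix (Fin m) (Fin m) ℝ))⁻¹.mulVec (A.mulVec x)))
      (nhdsWithin 0 (Set.Ioi (0 : ℝ))) (nhds 0) := by
  simp only [vecNorm_eq_norm_toLp, sigmaMax_eq_l2_opNorm] at hx hτp ⊢
  have hy : 0 < ‖toLp 2 (A *ᵥ x)‖ := hε.trans hx
  have hA : 0 < ‖A‖ :=
    pos_of_mul_pos_left (hy.trans_le (Matrix.norm_toLp_mulVec_le A x)) (norm_nonneg _)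
  have hτp_pos : 0 < τp := hτp ▸ div_pos (pow_pos hA 2) (sub_pos.2 hx)
  constructor
  · have h_bound := norm_toLp_le_mul_norm_inv_mulVec A (mul_pos hε hτp_pos) (A *ᵥ x)
    have h_choice : ‖A‖ ^ 2 + ε * τp = ‖toLp 2 (A *ᵥ x)‖ * τp := by
      rw [hτp]; field_simp [(sub_pos.2 hx).ne']; ring
    rw [h_choice, mul_assoc] at h_bound
    exact (le_mul_iff_one_le_right hy).1 h_bound
  · obtain ⟨C, hC⟩ := Matrix.exists_forall_norm_inv_mulVec_mulVec_le A x
    refine (tendsto_nhdsWithin_of_tendsto_nhds Filter.tendsto_id).zero_mul_isBoundedUnder_le ?_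
    refine Filter.isBoundedUnder_of_eventually_le (a := C) ?_
    filter_upwards [self_mem_nhdsWithin] with τ hτ
    simpa only [Function.comp_apply, norm_norm] using hC _ (mul_pos hε hτ)
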